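/- Let g be an N×N lower triangular matrix with all diagonal entries equal to 1, and let M be an N×N matrix over a commutative ring such that M_{jk} = 0 whenever j ≤ s and k ≤ N − s, for some fixed 1 ≤ s ≤ N. Then the determinant of the top-left s×s block of g·M·g⁻¹ equals det(M_{≤s, >N−s}) · det((g⁻¹)_{>N−s, ≤s}), where M_{≤s, >N−s} is the s×s submatrix of M with rows 1..s and columns N−s+1..N, and (g⁻¹)_{>N−s, ≤s} is the s×s submatrix of g⁻¹ with rows N−s+1..N and columns 1..s. -/
import Mathlib

open Matrix Finset

theorem principal_minor_of_unipotent_conjugation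
    {R : Type*} [CommRing R] {N : ℕ}
    (g M : Matrix (Fin N) (Fin N) R)
    (hgl : ∀ a b : Fin N, a < b → g a b = 0)
    (hgd : ∀ a : Fin N, g a a = 1)
    (s : ℕ) (hs1 : 1 ≤ s) (hsN : s ≤ N)
    (hM : ∀ a b : Fin N, (a : ℕ) < s → (b : ℕ) < N - s → M a b = 0) :
    ((g * M * g⁻¹).submatrix (Fin.castLE hsN) (Fin.castLE hsN)).det =
      (M.submatrix (Fin.castLE hsN)
        (fun a : Fin s => (⟨N - s + (a : ℕ), by omega⟩ : Fin N))).det *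
      ((g⁻¹).submatrix
        (fun a : Fin s => (⟨N - s + (a : ℕ), by omega⟩ : Fin N))
        (Fin.castLE hsN)).det := by
  set e : Fin s → Fin N := Fin.castLE hsN with he
  set f : Fin s → Fin N := fun a : Fin s => (⟨N - s + (a : ℕ), by omega⟩ : Fin N) with hf
  have hei : Function.Injective e := Fin.castLE_injective hsN
  have hfi : Function.Injective f := by
    intro a b h
    have := Fin.mk.injEq .. ▸ h
    simp only [hf, Fin.mk.injEq] at h
    exact Fin.ext (by omega)
  have sumlow : ∀ (F : Fin N → R), (∀ c : Fin N, s ≤ (c : ℕ) → F c = 0) →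
      ∑ c, F c = ∑ c : Fin s, F (e c) := by
    intro F h0
    have hm : ∑ x ∈ Finset.univ.map ⟨e, hei⟩, F x = ∑ c : Fin s, F (e c) := by
      rw [Finset.sum_map]; simp
    rw [← hm]
    refine (Finset.sum_subset (Finset.subset_univ _) ?_).symm
    intro x _ hx
    apply h0
    by_contra h
    push_neg at h
    exact hx (Finset.mem_map.mpr ⟨⟨x, h⟩, Finset.mem_univ _, rfl⟩)
  have sumhigh : ∀ (F : Fin N → R), (∀ c : Fin N, (c : ℕ) < N - s → F c = 0) →
      ∑ c, F c = ∑ c : Fin s, F (f c) := by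
    intro F h0
    have hm : ∑ x ∈ Finset.univ.map ⟨f, hfi⟩, F x = ∑ c : Fin s, F (f c) := by
      rw [Finset.sum_map]; simp
    rw [← hm]
    refine (Finset.sum_subset (Finset.subset_univ _) ?_).symm
    intro x _ hx
    apply h0
    by_contra h
    push_neg at h
    refine hx (Finset.mem_map.mpr ⟨⟨(x : ℕ) - (N - s), by omega⟩, Finset.mem_univ _, ?_⟩)
    simp only [hf, Function.Embedding.coeFn_mk]
    exact Fin.ext (by simp; omega)
  have key : (g * M * g⁻¹).submatrix e e =
      (g.submatrix e e) * (M.submatrix e f) * ((g⁻¹).submatrix f e) := by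
    ext a b
    simp only [Matrix.mul_apply, Matrix.submatrix_apply]
    have inner : ∀ d : Fin N, ∑ c, g (e a) c * M c d = ∑ c : Fin s, g (e a) (e c) * M (e c) d := by
      intro d
      refine sumlow _ fun c hc => ?_
      rw [hgl (e a) c (by simp only [he]; exact Fin.lt_def.mpr (by simp; omega)), zero_mul]
    calc ∑ d, (∑ c, g (e a) c * M c d) * g⁻¹ d (e b)
        = ∑ d : Fin s, (∑ c, g (e a) c * M c (f d)) * g⁻¹ (f d) (e b) := by
          refine sumhigh _ fun d hd => ?_
          rw [inner d]
          have : ∀ c : Fin s, g (e a) (e c) * M (e c) d = 0 := fun c => by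
            rw [hM (e c) d (by simp [he]) hd, mul_zero]
          rw [Finset.sum_congr rfl fun c _ => this c, Finset.sum_const_zero, zero_mul]
      _ = ∑ d : Fin s, (∑ c : Fin s, g (e a) (e c) * M (e c) (f d)) * g⁻¹ (f d) (e b) := by
          exact Finset.sum_congr rfl fun d _ => by rw [inner (f d)]
  rw [key, Matrix.det_mul, Matrix.det_mul]
  have hg1 : (g.submatrix e e).det = 1 := by
    have hbt : (g.submatrix e e).BlockTriangular OrderDual.toDual := by
      intro i j hij
      exact hgl (e i) (e j) (Fin.lt_def.mpr (by simp only [he, Fin.coe_castLE]; exact hij))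
    rw [Matrix.det_of_lowerTriangular _ hbt]
    simp [he, hgd]
  rw [hg1, one_mul]
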